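/- arXiv:2202.13141 — 3 statements merged into one kernel-verified Lean document; each statement's English description precedes it below -/
import Mathlib

section
/- Let H = (V,E) be a proper Eulerian hypergraph, fix a linear order on V and an enumeration of E, with associated list L = (L_1,…,L_t) and inversion sum s(M). Let M be a valid Gram matrix for H and suppose ᾱ : V → M_d(ℂ) (for some d ≥ 1) satisfies: ᾱ(v) is Hermitian and ᾱ(v)² = I for every v ∈ V; ᾱ(u)·ᾱ(v) = (−1)^{M_{u,v}}·ᾱ(v)·ᾱ(u) for all u,v ∈ V; and for every hyperedge e ∈ E, Π_{v∈e} ᾱ(v) = ε_e·I with ε_e ∈ {1,−1} (the product is well defined since factors in a common hyperedge commute). Then the number of hyperedges e with ε_e = −1 is odd if and only if s(M) = 1. -/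
open Matrix Finset

/-! ### Pauli matrices and observables -/

/-- The Pauli `X` matrix. -/
noncomputable def PX : Matrix (Fin 2) (Fin 2) ℂ := !![0, 1; 1, 0]

/-- The Pauli `Y` matrix. -/
noncomputable def PY : Matrix (Fin 2) (Fin 2) ℂ := !![0, -Complex.I; Complex.I, 0]

/-- The Pauli `Z` matrix. -/
noncomputable def PZ : Matrix (Fin 2) (Fin 2) ℂ := !![1, 0; 0, -1]

/-- The Kronecker (tensor) product of `k` 2×2 matrices, realized as a matrix indexed by
`Fin k → Fin 2` (a type of cardinality `2^k`). -/
noncomputable def pauliTensor (k : ℕ) (P : Fin k → Matrix (Fin 2) (Fin 2) ℂ) :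
    Matrix (Fin k → Fin 2) (Fin k → Fin 2) ℂ :=
  Matrix.of fun f g => ∏ i, P i (f i) (g i)

/-- A `k`-qubit Pauli observable: `ε · (P₁ ⊗ ⋯ ⊗ P_k)` with `ε ∈ {1,-1}` and each
`P_i ∈ {I, X, Y, Z}`. -/
def IsPauliObservable {k : ℕ} (A : Matrix (Fin k → Fin 2) (Fin k → Fin 2) ℂ) : Prop :=
  ∃ (ε : ℂ) (P : Fin k → Matrix (Fin 2) (Fin 2) ℂ),
    (ε = 1 ∨ ε = -1) ∧ (∀ i, P i = 1 ∨ P i = PX ∨ P i = PY ∨ P i = PZ) ∧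
    A = ε • pauliTensor k P

/-! ### Hypergraphs -/

/-- Product of the observables assigned to the vertices of a hyperedge (taken in increasing
order of the vertices; for commuting observables this is the product in any order). -/
noncomputable def edgeProd {V n : Type*} [LinearOrder V] [Fintype n] [DecidableEq n]
    (α : V → Matrix n n ℂ) (e : Finset V) : Matrix n n ℂ :=
  ((e.sort (· ≤ ·)).map α).prod

/-- A proper Eulerian hypergraph: each vertex lies in an even number of hyperedges, there are
no isolated vertices, no empty hyperedges, and all hyperedges are distinct. -/
def ProperEulerian {V E : Type*} [DecidableEq V] [Fintype E] (edge : E → Finset V) : Prop :=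
  (∀ v : V, Even (Finset.univ.filter (fun e : E => v ∈ edge e)).card) ∧
  (∀ v : V, ∃ e : E, v ∈ edge e) ∧
  (∀ e : E, (edge e).Nonempty) ∧
  Function.Injective edge

/-- A valid Gram matrix for a hypergraph. -/
def IsValidGram {V E : Type*} (edge : E → Finset V) (M : Matrix V V (ZMod 2)) : Prop :=
  M.IsSymm ∧ (∀ v, M v v = 0) ∧
  (∀ e : E, ∀ u ∈ edge e, ∀ v ∈ edge e, M u v = 0) ∧
  (∀ e : E, ∀ v : V, ∑ u ∈ edge e, M u v = 0)

/-- The concatenated list of vertices of the hyperedges, each hyperedge's vertices listed in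
increasing order, hyperedges enumerated by the list `le`. -/
def vertexList {V E : Type*} [LinearOrder V] (edge : E → Finset V) (le : List E) : List V :=
  (le.map fun e => (edge e).sort (· ≤ ·)).flatten

/-- The inversion sum `s(M) = ∑_{i<j, L_i > L_j} M_{L_i, L_j}`. -/
def inversionSum {V : Type*} [LinearOrder V] (M : Matrix V V (ZMod 2)) (L : List V) : ZMod 2 :=
  ∑ i : Fin L.length, ∑ j : Fin L.length,
    if i < j ∧ L.get j < L.get i then M (L.get i) (L.get j) else 0

/-- A magic Gram matrix: a valid Gram matrix with inversion sum 1. -/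
def MagicGram {V E : Type*} [LinearOrder V] (edge : E → Finset V) (le : List E)
    (M : Matrix V V (ZMod 2)) : Prop :=
  IsValidGram edge M ∧ inversionSum M (vertexList edge le) = 1

/-- A `k`-qubit Pauli-based magic assignment of a hypergraph. -/
def IsPauliMagicAssignment {V E : Type*} [LinearOrder V] [Fintype E] (k : ℕ)
    (edge : E → Finset V) (α : V → Matrix (Fin k → Fin 2) (Fin k → Fin 2) ℂ) : Prop :=
  (∀ v, IsPauliObservable (α v)) ∧
  (∀ e : E, ∀ u ∈ edge e, ∀ w ∈ edge e, Commute (α u) (α w)) ∧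
  (∀ e : E, edgeProd α (edge e) = 1 ∨ edgeProd α (edge e) = -1) ∧
  Odd (Nat.card {e : E // edgeProd α (edge e) = -1})

/-- A magic assignment of a hypergraph by Hermitian matrices squaring to the identity. -/
def IsMagicAssignment {V E n : Type*} [LinearOrder V] [Fintype E] [Fintype n] [DecidableEq n]
    (edge : E → Finset V) (α : V → Matrix n n ℂ) : Prop :=
  (∀ v, (α v).IsHermitian) ∧ (∀ v, α v * α v = 1) ∧
  (∀ e : E, ∀ u ∈ edge e, ∀ w ∈ edge e, Commute (α u) (α w)) ∧
  (∀ e : E, edgeProd α (edge e) = 1 ∨ edgeProd α (edge e) = -1) ∧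
  Odd (Nat.card {e : E // edgeProd α (edge e) = -1})

open scoped Classical in
/-- The sign vector `c(α) ∈ (ZMod 2)^E` of an assignment: `0` on hyperedges with product `+I`,
`1` on the others. -/
noncomputable def cvec {V E n : Type*} [LinearOrder V] [Fintype E] [Fintype n] [DecidableEq n]
    (edge : E → Finset V) (α : V → Matrix n n ℂ) : E → ZMod 2 :=
  fun e => if edgeProd α (edge e) = 1 then 0 else 1

/-- The incidence matrix of a hypergraph. -/
def incMatrix {V E : Type*} [DecidableEq V] (edge : E → Finset V) : Matrix V E (ZMod 2) :=
  Matrix.of fun v e => if v ∈ edge e then 1 else 0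

/-- Hamming weight of a vector over `ZMod 2`. -/
def hWeight {E : Type*} [Fintype E] (y : E → ZMod 2) : ℕ :=
  (Finset.univ.filter fun e => y e ≠ 0).card

/-- The symplectic product on `(ZMod 2)^{2k}` (coordinates indexed by `Fin k ⊕ Fin k`). -/
def sympl (k : ℕ) (s t : Fin k ⊕ Fin k → ZMod 2) : ZMod 2 :=
  ∑ i : Fin k, (s (Sum.inl i) * t (Sum.inr i) + s (Sum.inr i) * t (Sum.inl i))

/-!
Multiplying the hyperedge relations in the order of the enumeration gives
`ᾱ(L_1) ⋯ ᾱ(L_t) = (∏ ε_e) • I`. Sorting the word `ᾱ(L_1) ⋯ ᾱ(L_t)` by insertion, every pair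
`i < j` with `L_i > L_j` is swapped exactly once, at the cost of the sign `(-1)^{M_{L_i,L_j}}`,
so the word is `(-1)^{s(M)}` times the sorted word. Each vertex occurs an even number of times
in `L` because the hypergraph is Eulerian, so the sorted word collapses to `I` by `ᾱ(v)² = I`.
Hence `∏ ε_e = (-1)^{s(M)}`, and `∏ ε_e = (-1)^{#{e | ε_e = -1}}`.
-/

lemma neg_one_pow_val_add {R : Type*} [Ring R] (x y : ZMod 2) :
    (-1 : R) ^ (x + y).val = (-1) ^ x.val * (-1) ^ y.val := by
  rw [← pow_add, ZMod.val_add, ← neg_one_pow_eq_pow_mod_two]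

lemma odd_iff_eq_one_of_neg_one_pow_eq {R : Type*} [Ring R] (hR : (-1 : R) ≠ 1) {n : ℕ}
    {s : ZMod 2} (h : (-1 : R) ^ n = (-1) ^ s.val) : Odd n ↔ s = 1 := by
  rcases (by decide : ∀ s : ZMod 2, s = 0 ∨ s = 1) s with rfl | rfl
  · rw [ZMod.val_zero, pow_zero, neg_one_pow_eq_one_iff_even hR] at h
    simpa [← Nat.not_even_iff_odd] using h
  · rw [ZMod.val_one, pow_one, neg_one_pow_eq_neg_one_iff_odd hR] at h
    simpa using h

lemma prod_eq_neg_one_pow_card {E R : Type*} [Fintype E] [CommMonoid R] [HasDistribNeg R]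
    {ε : E → R} (hε : ∀ e, ε e = 1 ∨ ε e = -1) :
    ∏ e, ε e = (-1) ^ Nat.card {e // ε e = -1} := by
  classical
  rw [← prod_filter_mul_prod_filter_not univ (ε · = -1),
    prod_congr rfl fun e he => (mem_filter.mp he).2, prod_const,
    prod_eq_one fun e he => (hε e).resolve_right (mem_filter.mp he).2, mul_one,
    Nat.card_eq_fintype_card, Fintype.card_subtype]

@[to_additive]
lemma prod_map_eq_prod_univ_of_nodup {E M : Type*} [Fintype E] [CommMonoid M] {l : List E}
    (hnd : l.Nodup) (hmem : ∀ e, e ∈ l) (f : E → M) : (l.map f).prod = ∏ e, f e := by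
  classical
  rw [← List.prod_toFinset f hnd, eq_univ_of_forall fun e => List.mem_toFinset.mpr (hmem e)]

lemma inversionSum_cons {V : Type*} [LinearOrder V] (M : Matrix V V (ZMod 2)) (a : V)
    (l : List V) :
    inversionSum M (a :: l) =
      (l.map fun b => if b < a then M a b else 0).sum + inversionSum M l := by
  simp only [inversionSum, List.length_cons, List.get_eq_getElem, Fin.sum_univ_succ,
    not_lt_zero, Fin.coe_ofNat_eq_mod, Nat.zero_mod, List.getElem_cons_zero, false_and,
    if_false, Fin.val_succ, List.getElem_cons_succ, zero_add, Fin.succ_pos, true_and,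
    Fin.succ_lt_succ_iff, add_left_inj]
  exact Fin.sum_univ_fun_getElem l fun b => if b < a then M a b else 0

lemma prod_map_eq_one_of_sorted_of_even_count {V A : Type*} [LinearOrder V] [Monoid A]
    (α : V → A) (hsq : ∀ v, α v * α v = 1) :
    ∀ L : List V, L.Pairwise (· ≤ ·) → (∀ v, Even (L.count v)) → (L.map α).prod = 1
  | [], _, _ => rfl
  | [a], _, hcount => absurd (hcount a) (by simp)
  | a :: b :: L, hL, hcount => by
    obtain ⟨hab, hbL⟩ := List.pairwise_cons.mp hL
    have ha : a ∈ b :: L := by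
      have hodd := hcount a
      rw [List.count_cons_self, Nat.even_add_one] at hodd
      exact List.count_pos_iff.mp (Nat.pos_of_ne_zero fun h => hodd (h ▸ Even.zero))
    have hba : b = a := (List.mem_cons.mp ha).elim (·.symm)
      fun haL => le_antisymm (List.rel_of_pairwise_cons hbL haL) (hab b List.mem_cons_self)
    subst hba
    rw [List.map_cons, List.map_cons, List.prod_cons, List.prod_cons, ← mul_assoc, hsq, one_mul]
    refine prod_map_eq_one_of_sorted_of_even_count α hsq L (List.pairwise_cons.mp hbL).2
      fun v => ?_
    have := hcount v
    simp only [List.count_cons] at this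
    split_ifs at this <;> simpa [Nat.even_add_one] using this

section Sorting

variable {V R A : Type*} [LinearOrder V] [CommRing R] [Ring A] [Algebra R A]
  (M : Matrix V V (ZMod 2)) (α : V → A)

lemma mul_prod_map_orderedInsert
    (hcomm : ∀ u v : V, α u * α v = ((-1 : R) ^ (M u v).val) • (α v * α u))
    (a : V) {L : List V} (hL : L.Pairwise (· ≤ ·)) :
    α a * (L.map α).prod =
      (-1 : R) ^ (L.map fun b => if b < a then M a b else 0).sum.val •
        ((L.orderedInsert (· ≤ ·) a).map α).prod := by
  induction L with
  | nil => simp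
  | cons b L ih =>
    obtain ⟨hbL, hL⟩ := List.pairwise_cons.mp hL
    by_cases hab : a ≤ b
    · have hzero : ((b :: L).map fun c => if c < a then M a c else 0).sum = 0 :=
        List.sum_eq_zero fun x hx => by
          obtain ⟨c, hc, rfl⟩ := List.mem_map.mp hx
          have hac : a ≤ c := (List.mem_cons.mp hc).elim (· ▸ hab) (hab.trans <| hbL c ·)
          exact if_neg hac.not_gt
      rw [List.orderedInsert, if_pos hab, hzero, ZMod.val_zero, pow_zero, one_smul,
        List.map_cons (f := α) (a := a), List.prod_cons]
    · rw [List.orderedInsert, if_neg hab, List.map_cons, List.prod_cons, ← mul_assoc, hcomm a b,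
        smul_mul_assoc, mul_assoc, ih hL, List.map_cons, List.sum_cons,
        if_pos (not_le.mp hab), neg_one_pow_val_add, List.map_cons, List.prod_cons,
        mul_smul_comm, smul_smul]

lemma prod_map_eq_smul_prod_map_insertionSort
    (hcomm : ∀ u v : V, α u * α v = ((-1 : R) ^ (M u v).val) • (α v * α u)) (L : List V) :
    (L.map α).prod =
      (-1 : R) ^ (inversionSum M L).val • ((L.insertionSort (· ≤ ·)).map α).prod := by
  induction L with
  | nil => simp [inversionSum]
  | cons a L ih =>
    have hperm := ((List.perm_insertionSort (· ≤ ·) L).map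
      fun b => if b < a then M a b else 0).sum_eq
    rw [List.map_cons, List.prod_cons, ih, mul_smul_comm,
      mul_prod_map_orderedInsert M α hcomm a (List.pairwise_insertionSort _ L), smul_smul,
      hperm, ← neg_one_pow_val_add, inversionSum_cons, add_comm]
    rfl

lemma prod_map_eq_algebraMap_neg_one_pow_inversionSum
    (hcomm : ∀ u v : V, α u * α v = ((-1 : R) ^ (M u v).val) • (α v * α u))
    (hsq : ∀ v, α v * α v = 1) {L : List V} (hL : ∀ v, Even (L.count v)) :
    (L.map α).prod = algebraMap R A ((-1) ^ (inversionSum M L).val) := by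
  rw [prod_map_eq_smul_prod_map_insertionSort M α hcomm L,
    prod_map_eq_one_of_sorted_of_even_count α hsq _ (List.pairwise_insertionSort (· ≤ ·) L)
      fun v => (List.perm_insertionSort (· ≤ ·) L).count_eq v ▸ hL v,
    Algebra.algebraMap_eq_smul_one]

end Sorting

lemma prod_map_vertexList {V E n : Type*} [LinearOrder V] [Fintype n] [DecidableEq n]
    (edge : E → Finset V) (le : List E) (α : V → Matrix n n ℂ) :
    ((vertexList edge le).map α).prod = (le.map fun e => edgeProd α (edge e)).prod := by
  simp [vertexList, edgeProd, List.prod_flatten, List.map_flatten, Function.comp_def]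

lemma count_vertexList {V E : Type*} [LinearOrder V] [Fintype E] (edge : E → Finset V)
    {le : List E} (hnd : le.Nodup) (hmem : ∀ e, e ∈ le) (v : V) :
    (vertexList edge le).count v = #{e | v ∈ edge e} := by
  have hsort (s : Finset V) : (s.sort (· ≤ ·)).count v = if v ∈ s then 1 else 0 := by
    rw [← Multiset.coe_count, Finset.sort_eq, Multiset.count_eq_of_nodup s.nodup]
    rfl
  rw [vertexList, List.count_flatten, List.map_map, Function.comp_def]
  simp only [hsort]
  rw [sum_map_eq_sum_univ_of_nodup hnd hmem, card_filter]

theorem stmt6_general {V E : Type*} [LinearOrder V] [Fintype E]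
    (edge : E → Finset V) (hH : ProperEulerian edge)
    (le : List E) (hnd : le.Nodup) (hmem : ∀ e : E, e ∈ le)
    (M : Matrix V V (ZMod 2))
    (d : ℕ) (hd : 1 ≤ d) (α : V → Matrix (Fin d) (Fin d) ℂ)
    (hsq : ∀ v, α v * α v = 1)
    (hcomm : ∀ u v : V, α u * α v = ((-1 : ℂ) ^ (M u v).val) • (α v * α u))
    (ε : E → ℂ) (hε : ∀ e, ε e = 1 ∨ ε e = -1)
    (hprod : ∀ e : E, edgeProd α (edge e) = ε e • 1) :
    Odd (Nat.card {e : E // ε e = -1}) ↔ inversionSum M (vertexList edge le) = 1 := by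
  have : Nonempty (Fin d) := ⟨⟨0, hd⟩⟩
  have hedges : ((vertexList edge le).map α).prod = algebraMap ℂ _ (∏ e, ε e) := by
    simp_rw [prod_map_vertexList, hprod, ← Algebra.algebraMap_eq_smul_one,
      ← prod_map_eq_prod_univ_of_nodup hnd hmem, map_list_prod, List.map_map, Function.comp_def]
  have hsort := prod_map_eq_algebraMap_neg_one_pow_inversionSum M α hcomm hsq
    fun v => (count_vertexList edge hnd hmem v).symm ▸ hH.1 v
  refine odd_iff_eq_one_of_neg_one_pow_eq (R := ℂ) (by norm_num) ?_
  rw [← prod_eq_neg_one_pow_card hε]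
  exact (algebraMap ℂ (Matrix (Fin d) (Fin d) ℂ)).injective (hedges.symm.trans hsort)

/-- For a valid Gram matrix `M` of a proper Eulerian hypergraph and an
assignment `α` of Hermitian square roots of the identity realizing the (anti)commutation
relations of `M` and having hyperedge products `ε_e · I` with `ε_e = ±1`, the number of
hyperedges with `ε_e = -1` is odd iff `s(M) = 1`. -/
theorem stmt6 {V E : Type*} [Fintype V] [LinearOrder V] [Fintype E]
    (edge : E → Finset V) (hH : ProperEulerian edge)
    (le : List E) (hnd : le.Nodup) (hmem : ∀ e : E, e ∈ le)
    (M : Matrix V V (ZMod 2)) (hM : IsValidGram edge M)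
    (d : ℕ) (hd : 1 ≤ d) (α : V → Matrix (Fin d) (Fin d) ℂ)
    (hherm : ∀ v, (α v).IsHermitian) (hsq : ∀ v, α v * α v = 1)
    (hcomm : ∀ u v : V, α u * α v = ((-1 : ℂ) ^ (M u v).val) • (α v * α u))
    (ε : E → ℂ) (hε : ∀ e, ε e = 1 ∨ ε e = -1)
    (hprod : ∀ e : E, edgeProd α (edge e) = ε e • 1) :
    Odd (Nat.card {e : E // ε e = -1}) ↔ inversionSum M (vertexList edge le) = 1 :=
  stmt6_general edge hH le hnd hmem M d hd α hsq hcomm ε hε hprod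
end

section
/- Let H = (V,E) be a hypergraph in which every vertex lies in an even number of hyperedges, with incidence matrix M. Then every element of the row space row(M) ⊆ (ZMod 2)^E has even Hamming weight. Consequently, for every c ∈ (ZMod 2)^E of odd Hamming weight there is no classical assignment a : V → {1,−1} with Π_{v∈e} a(v) = (−1)^{c_e} for all e ∈ E; in particular, no classical assignment reproduces all the context signs of a magic assignment of H. -/
open Matrix Finset

lemma zmod2_eq_ite (z : ZMod 2) : z = if z ≠ 0 then 1 else 0 := by
  revert z; decide

lemma hWeight_cast {E : Type*} [Fintype E] (y : E → ZMod 2) :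
    ((hWeight y : ZMod 2)) = ∑ e, y e := by
  rw [hWeight]
  rw [← Finset.sum_boole]

  exact Finset.sum_congr rfl fun e _ => (zmod2_eq_ite (y e)).symm

lemma even_hWeight_iff {E : Type*} [Fintype E] (y : E → ZMod 2) :
    Even (hWeight y) ↔ ∑ e, y e = 0 := by
  rw [← hWeight_cast, ZMod.natCast_eq_zero_iff]
  exact ⟨fun h => h.two_dvd, fun h => (even_iff_two_dvd).mpr h⟩

lemma neg_one_pow_val_add_s15 (a b : ZMod 2) :
    ((-1 : ℤ) ^ (a + b).val) = (-1) ^ a.val * (-1) ^ b.val := by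
  revert a b; decide

lemma neg_one_pow_val_inj (a b : ZMod 2)
    (h : ((-1 : ℤ) ^ a.val) = (-1) ^ b.val) : a = b := by
  revert a b; decide

/-- If every vertex of a hypergraph lies in an even number of hyperedges,
then every element of the row space of the incidence matrix has even Hamming weight; hence no
classical assignment realizes a sign vector of odd Hamming weight, and in particular no
classical assignment reproduces all the context signs of a magic assignment. -/
theorem stmt15 {V E : Type*} [Fintype V] [LinearOrder V] [Fintype E]
    (edge : E → Finset V)
    (heven : ∀ v : V, Even (Finset.univ.filter (fun e : E => v ∈ edge e)).card) :
    (∀ x : V → ZMod 2, Even (hWeight (Matrix.vecMul x (incMatrix edge)))) ∧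
    (∀ c : E → ZMod 2, Odd (hWeight c) →
      ¬ ∃ a : V → ℤ, (∀ v, a v = 1 ∨ a v = -1) ∧
        ∀ e : E, (∏ v ∈ edge e, a v) = (-1 : ℤ) ^ (c e).val) ∧
    (∀ d : ℕ, 1 ≤ d → ∀ α : V → Matrix (Fin d) (Fin d) ℂ, IsMagicAssignment edge α →
      ¬ ∃ a : V → ℤ, (∀ v, a v = 1 ∨ a v = -1) ∧
        ∀ e : E, (∏ v ∈ edge e, a v) = (-1 : ℤ) ^ (cvec edge α e).val) := by
  classical
  -- row space computation
  have hrow : ∀ x : V → ZMod 2, ∀ e : E,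
      Matrix.vecMul x (incMatrix edge) e = ∑ v ∈ edge e, x v := by
    intro x e
    simp only [Matrix.vecMul, dotProduct, incMatrix, Matrix.of_apply, mul_ite, mul_one,
      mul_zero]
    rw [Finset.sum_ite_mem, Finset.univ_inter]
  have part1 : ∀ x : V → ZMod 2, Even (hWeight (Matrix.vecMul x (incMatrix edge))) := by
    intro x
    rw [even_hWeight_iff]
    calc ∑ e, Matrix.vecMul x (incMatrix edge) e
        = ∑ e : E, ∑ v ∈ edge e, x v := by
          exact Finset.sum_congr rfl fun e _ => hrow x e
      _ = ∑ e : E, ∑ v : V, if v ∈ edge e then x v else 0 := by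
          refine Finset.sum_congr rfl fun e _ => ?_
          rw [Finset.sum_ite_mem, Finset.univ_inter]
      _ = ∑ v : V, ∑ e : E, if v ∈ edge e then x v else 0 := Finset.sum_comm
      _ = ∑ v : V, ((Finset.univ.filter (fun e : E => v ∈ edge e)).card : ZMod 2) * x v := by
          refine Finset.sum_congr rfl fun v _ => ?_
          rw [Finset.sum_ite, Finset.sum_const, Finset.sum_const_zero, add_zero, nsmul_eq_mul]
      _ = 0 := by
          refine Finset.sum_eq_zero fun v _ => ?_
          have h0 : ((Finset.univ.filter (fun e : E => v ∈ edge e)).card : ZMod 2) = 0 := by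
            rw [ZMod.natCast_eq_zero_iff]
            exact (heven v).two_dvd
          rw [h0, zero_mul]
  have part2 : ∀ c : E → ZMod 2, Odd (hWeight c) →
      ¬ ∃ a : V → ℤ, (∀ v, a v = 1 ∨ a v = -1) ∧
        ∀ e : E, (∏ v ∈ edge e, a v) = (-1 : ℤ) ^ (c e).val := by
    rintro c hodd ⟨a, ha, hprod⟩
    set x : V → ZMod 2 := fun v => if a v = 1 then 0 else 1 with hx
    have hav : ∀ v, a v = (-1 : ℤ) ^ (x v).val := by
      intro v
      rcases ha v with h | h <;> simp [hx, h] <;> decide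
    have key : ∀ s : Finset V,
        (∏ v ∈ s, (-1 : ℤ) ^ (x v).val) = (-1) ^ ((∑ v ∈ s, x v).val) := by
      intro s
      induction s using Finset.cons_induction with
      | empty => simp
      | cons v s hv ih =>
        rw [Finset.prod_cons, Finset.sum_cons, ih, neg_one_pow_val_add_s15]
    have hceq : c = Matrix.vecMul x (incMatrix edge) := by
      funext e
      refine (neg_one_pow_val_inj _ _ ?_).symm
      rw [hrow x e, ← key, ← hprod e]
      exact (Finset.prod_congr rfl fun v _ => (hav v).symm)
    have := part1 x
    rw [← hceq] at this
    exact (Nat.not_odd_iff_even.mpr this) hodd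
  refine ⟨part1, part2, ?_⟩
  intro d hd α hmagic
  apply part2
  -- the sign vector of a magic assignment has odd Hamming weight
  have hne : (1 : Matrix (Fin d) (Fin d) ℂ) ≠ -1 := by
    intro h
    have := congrFun (congrFun h ⟨0, hd⟩) ⟨0, hd⟩
    simp [Matrix.one_apply] at this
    norm_num at this
  obtain ⟨_, _, _, hdich, hodd⟩ := hmagic
  have hset : (Finset.univ.filter fun e : E => cvec edge α e ≠ 0) =
      (Finset.univ.filter fun e : E => edgeProd α (edge e) = -1) := by
    refine Finset.filter_congr fun e _ => ?_
    constructor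
    · intro hc
      rcases hdich e with h | h
      · exact absurd (by simp [cvec, h]) hc
      · exact h
    · intro h
      have h1 : edgeProd α (edge e) ≠ 1 := fun hx' => hne (hx'.symm.trans h)
      simp [cvec, h1]
  rw [hWeight, hset]
  have : Nat.card {e : E // edgeProd α (edge e) = -1} =
      (Finset.univ.filter fun e : E => edgeProd α (edge e) = -1).card := by
    rw [Nat.card_eq_fintype_card, Fintype.card_subtype]
  rw [← this]
  exact hodd
end

section
/- Let V = (ZMod 3)^3 and let E be the set of the 27 hyperedges {t, t+(1,0,0), t+(0,1,0), t+(0,0,1)} for t ∈ V (each a 4-element subset of V; this hypergraph is proper Eulerian, each vertex lying in exactly 4 hyperedges). Then there exists a map ᾱ : V → M_8(ℂ) such that: each ᾱ(v) is of the form ε_v·(P_1 ⊗ P_2 ⊗ P_3) with ε_v ∈ {1,−1} and each P_i ∈ {X, Y, Z} (no identity factors); the 27 unsigned tensor products P_1 ⊗ P_2 ⊗ P_3 occurring are pairwise distinct (so all 27 identity-free 3-qubit Pauli words occur exactly once); the observables assigned to the four vertices of any common hyperedge pairwise commute; and Π_{v∈e} ᾱ(v) = −I for every hyperedge e ∈ E.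 In particular, this hypergraph admits a 3-qubit Pauli-based magic assignment in which all 27 contexts are negative. -/
open Matrix Finset

/-- The 27 hyperedges of the MS3-27 hypergraph on `(ZMod 3)³`: the translates of the starter
context `{0, (1,0,0), (0,1,0), (0,0,1)}`. -/
def edge27 (t : ZMod 3 × ZMod 3 × ZMod 3) : Finset (ZMod 3 × ZMod 3 × ZMod 3) :=
  {t, t + (1, 0, 0), t + (0, 1, 0), t + (0, 0, 1)}

abbrev V3 := ZMod 3 × ZMod 3 × ZMod 3

lemma pauliTensor_mul (k : ℕ) (P Q : Fin k → Matrix (Fin 2) (Fin 2) ℂ) :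
    pauliTensor k P * pauliTensor k Q = pauliTensor k (fun i => P i * Q i) := by
  ext f g
  simp only [Matrix.mul_apply, pauliTensor, Matrix.of_apply]
  rw [Finset.prod_univ_sum]
  rw [Fintype.piFinset_univ]
  simp [Finset.prod_mul_distrib]

lemma pauliTensor_smul (k : ℕ) (c : Fin k → ℂ) (P : Fin k → Matrix (Fin 2) (Fin 2) ℂ) :
    pauliTensor k (fun i => c i • P i) = (∏ i, c i) • pauliTensor k P := by
  ext f g
  simp [pauliTensor, Matrix.smul_apply, smul_eq_mul, Finset.prod_mul_distrib]

lemma pauliTensor_one (k : ℕ) : pauliTensor k (fun _ => (1 : Matrix (Fin 2) (Fin 2) ℂ)) = 1 := by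
  ext f g
  simp [pauliTensor, Matrix.one_apply, Finset.prod_boole, funext_iff]

lemma trace_pauliTensor (k : ℕ) (P : Fin k → Matrix (Fin 2) (Fin 2) ℂ) :
    (pauliTensor k P).trace = ∏ i, (P i).trace := by
  simp only [Matrix.trace, Matrix.diag, pauliTensor, Matrix.of_apply]
  rw [Finset.prod_univ_sum, Fintype.piFinset_univ]
noncomputable def σp (a : ZMod 3) : Matrix (Fin 2) (Fin 2) ℂ :=
  if a = 0 then PX else if a = 1 then PY else PZ

lemma zmod3_cases (a : ZMod 3) : a = 0 ∨ a = 1 ∨ a = 2 := by revert a; decide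

lemma σp0 : σp 0 = PX := by simp [σp]
lemma σp1 : σp 1 = PY := by simp [σp]
lemma σp2 : σp 2 = PZ := by
  have h0 : (2 : ZMod 3) ≠ 0 := by decide
  have h1 : (2 : ZMod 3) ≠ 1 := by decide
  simp [σp, h0, h1]

lemma hXX : PX * PX = 1 := by
  ext i j; fin_cases i <;> fin_cases j <;>
    simp [PX, Matrix.mul_apply, Fin.sum_univ_two, Matrix.one_apply]
lemma hYY : PY * PY = 1 := by
  ext i j; fin_cases i <;> fin_cases j <;>
    simp [PY, Matrix.mul_apply, Fin.sum_univ_two, Matrix.one_apply]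
lemma hZZ : PZ * PZ = 1 := by
  ext i j; fin_cases i <;> fin_cases j <;>
    simp [PZ, Matrix.mul_apply, Fin.sum_univ_two, Matrix.one_apply]

lemma hXYXY : PX * PY * PX * PY = -1 := by
  ext i j; fin_cases i <;> fin_cases j <;>
    simp [PX, PY, Matrix.mul_apply, Fin.sum_univ_two, Matrix.one_apply, Complex.I_mul_I]

lemma hYZYZ : PY * PZ * PY * PZ = -1 := by
  ext i j; fin_cases i <;> fin_cases j <;>
    simp [PY, PZ, Matrix.mul_apply, Fin.sum_univ_two, Matrix.one_apply, Complex.I_mul_I]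

lemma hZXZX : PZ * PX * PZ * PX = -1 := by
  ext i j; fin_cases i <;> fin_cases j <;>
    simp [PZ, PX, Matrix.mul_apply, Fin.sum_univ_two, Matrix.one_apply, Complex.I_mul_I]


-- anticommutation
lemma hXY : PX * PY = -(PY * PX) := by
  ext i j; fin_cases i <;> fin_cases j <;>
    simp [PX, PY, Matrix.mul_apply, Fin.sum_univ_two]
lemma hYZ : PY * PZ = -(PZ * PY) := by
  ext i j; fin_cases i <;> fin_cases j <;>
    simp [PY, PZ, Matrix.mul_apply, Fin.sum_univ_two]
lemma hZX : PZ * PX = -(PX * PZ) := by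
  ext i j; fin_cases i <;> fin_cases j <;>
    simp [PZ, PX, Matrix.mul_apply, Fin.sum_univ_two]

-- traces
lemma trXY : (PX * PY).trace = 0 := by
  simp [PX, PY, Matrix.trace_fin_two, Matrix.mul_apply, Fin.sum_univ_two]
lemma trYZ : (PY * PZ).trace = 0 := by
  simp [PY, PZ, Matrix.trace_fin_two, Matrix.mul_apply, Fin.sum_univ_two]
lemma trZX : (PZ * PX).trace = 0 := by
  simp [PZ, PX, Matrix.trace_fin_two, Matrix.mul_apply, Fin.sum_univ_two]
lemma trYX : (PY * PX).trace = 0 := by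
  simp [PY, PX, Matrix.trace_fin_two, Matrix.mul_apply, Fin.sum_univ_two]
lemma trZY : (PZ * PY).trace = 0 := by
  simp [PZ, PY, Matrix.trace_fin_two, Matrix.mul_apply, Fin.sum_univ_two]
lemma trXZ : (PX * PZ).trace = 0 := by
  simp [PX, PZ, Matrix.trace_fin_two, Matrix.mul_apply, Fin.sum_univ_two]

lemma σp_sq (a : ZMod 3) : σp a * σp a = 1 := by
  rcases zmod3_cases a with h | h | h <;> subst h <;>
    simp [σp0, σp1, σp2, hXX, hYY, hZZ]

lemma σp_anticomm {a b : ZMod 3} (h : a ≠ b) : σp b * σp a = -(σp a * σp b) := by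
  rcases zmod3_cases a with ha | ha | ha <;> rcases zmod3_cases b with hb | hb | hb <;>
    subst ha <;> subst hb <;> first
    | exact absurd rfl h
    | simp [σp0, σp1, σp2, hXY, hYZ, hZX]

lemma σp_trace_ne {a b : ZMod 3} (h : a ≠ b) : (σp a * σp b).trace = 0 := by
  rcases zmod3_cases a with ha | ha | ha <;> rcases zmod3_cases b with hb | hb | hb <;>
    subst ha <;> subst hb <;> first
    | exact absurd rfl h
    | simp [σp0, σp1, σp2, trXY, trYZ, trZX, trYX, trZY, trXZ]

lemma σp_quad_a (x : ZMod 3) : σp x * σp x * σp (x + 1) * σp (x + 1) = 1 := by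
  rw [σp_sq, one_mul, σp_sq]
lemma σp_quad_c (x : ZMod 3) : σp x * σp (x + 1) * σp (x + 1) * σp x = 1 := by
  rw [mul_assoc (σp x) _ _, σp_sq, mul_one, σp_sq]
lemma σp_quad_b (x : ZMod 3) : σp x * σp (x + 1) * σp x * σp (x + 1) = -1 := by
  rcases zmod3_cases x with h | h | h <;> subst h
  · rw [show (0:ZMod 3) + 1 = 1 from by decide, σp0, σp1]; exact hXYXY
  · rw [show (1:ZMod 3) + 1 = 2 from by decide, σp1, σp2]; exact hYZYZ
  · rw [show (2:ZMod 3) + 1 = 0 from by decide, σp2, σp0]; exact hZXZX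

def base4 : Finset V3 := {0, (1,0,0), (0,1,0), (0,0,1)}

def wv (v : V3) : Fin 3 → ZMod 3 :=
  ![v.2.1 + v.2.2, v.1 + v.2.2, v.1 + v.2.1]

lemma edge27_eq (t : V3) : edge27 t = base4.image (t + ·) := by
  simp [edge27, base4, Finset.image_insert]

lemma wv_inj : ∀ u v : V3, wv u = wv v → u = v := by decide

lemma even_mm : ∀ t : V3, ∀ u ∈ edge27 t, ∀ w ∈ edge27 t,
    Even ((univ.filter fun i : Fin 3 => wv u i ≠ wv w i).card) := by decide

lemma card_edge27 (t : V3) : (edge27 t).card = 4 := by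
  rw [edge27_eq, Finset.card_image_of_injective _ (add_right_injective t)]
  decide

lemma sum_edge27 (t : V3) : ∑ v ∈ edge27 t, v = t + (1,1,1) := by
  rw [edge27_eq, Finset.sum_image (fun a _ b _ h => by exact add_left_cancel h)]
  rw [Finset.sum_add_distrib]
  rw [show (∑ _x ∈ base4, t) = base4.card • t from Finset.sum_const t]
  rw [show base4.card = 4 from by decide, show (∑ x ∈ base4, x) = ((1,1,1) : V3) from by decide]
  rw [show (4 : ℕ) • t = t + 3 • t from by rw [succ_nsmul']]
  rw [show (3 : ℕ) • t = 0 from by revert t; decide, add_zero]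

lemma edge27_inj : Function.Injective edge27 := by
  intro s t h
  have hs := sum_edge27 s
  rw [h, sum_edge27 t] at hs
  exact (add_right_cancel hs).symm

lemma filter_card (v : V3) : (Finset.univ.filter fun t => v ∈ edge27 t).card = 4 := by
  have : (Finset.univ.filter fun t => v ∈ edge27 t) = base4.image (fun x => v - x) := by
    ext t
    simp only [Finset.mem_filter, Finset.mem_univ, true_and, edge27_eq, Finset.mem_image]
    constructor
    · rintro ⟨x, hx, rfl⟩; exact ⟨x, hx, by ring⟩
    · rintro ⟨x, hx, rfl⟩; exact ⟨x, hx, by ring⟩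
  rw [this, Finset.card_image_of_injective _ sub_right_injective]
  decide

lemma wv_add (p q : V3) (i : Fin 3) : wv (p + q) i = wv p i + wv q i := by
  fin_cases i <;> simp [wv, Prod.fst_add, Prod.snd_add] <;> ring

lemma prod_pm {p : Fin 3 → Prop} [DecidablePred p]
    (h : Even ((univ.filter fun i => ¬ p i).card)) :
    (∏ i, if p i then (1:ℂ) else -1) = 1 := by
  rw [Finset.prod_ite]
  simp [h.neg_one_pow]

lemma commute_pt (u w : V3)
    (h : Even ((univ.filter fun i : Fin 3 => wv u i ≠ wv w i).card)) :
    Commute (pauliTensor 3 fun i => σp (wv u i)) (pauliTensor 3 fun i => σp (wv w i)) := by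
  show pauliTensor 3 (fun i => σp (wv u i)) * pauliTensor 3 (fun i => σp (wv w i))
      = pauliTensor 3 (fun i => σp (wv w i)) * pauliTensor 3 (fun i => σp (wv u i))
  rw [pauliTensor_mul, pauliTensor_mul]
  have key : (fun i => σp (wv w i) * σp (wv u i))
      = fun i => (if wv u i = wv w i then (1:ℂ) else -1) • (σp (wv u i) * σp (wv w i)) := by
    funext i
    by_cases hi : wv u i = wv w i
    · simp [hi]
    · simp [hi, σp_anticomm hi]
  rw [key, pauliTensor_smul, prod_pm h, one_smul]

lemma pt_inj : Function.Injective (fun v : V3 => pauliTensor 3 (fun i => σp (wv v i))) := by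
  intro u v h
  simp only at h
  apply wv_inj
  funext i
  by_contra hi
  have h2 : pauliTensor 3 (fun i => σp (wv u i)) * pauliTensor 3 (fun i => σp (wv v i))
      = pauliTensor 3 (fun i => σp (wv v i)) * pauliTensor 3 (fun i => σp (wv v i)) := by rw [h]
  rw [pauliTensor_mul, pauliTensor_mul] at h2
  have h3 := congrArg Matrix.trace h2
  rw [trace_pauliTensor, trace_pauliTensor] at h3
  rw [Finset.prod_eq_zero (Finset.mem_univ i) (σp_trace_ne hi)] at h3
  have h4 : ∀ j : Fin 3, (σp (wv v j) * σp (wv v j)).trace = 2 := by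
    intro j; rw [σp_sq, Matrix.trace_one]; norm_num
  rw [Finset.prod_congr rfl (fun j _ => h4 j)] at h3
  norm_num [Fin.prod_univ_three] at h3

lemma edge_prod (t : V3) :
    pauliTensor 3 (fun i => σp (wv t i)) * pauliTensor 3 (fun i => σp (wv (t + (1,0,0)) i)) *
    pauliTensor 3 (fun i => σp (wv (t + (0,1,0)) i)) *
    pauliTensor 3 (fun i => σp (wv (t + (0,0,1)) i)) = -1 := by
  rw [pauliTensor_mul, pauliTensor_mul, pauliTensor_mul]
  have key : (fun i => σp (wv t i) * σp (wv (t + (1,0,0)) i) * σp (wv (t + (0,1,0)) i) *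
        σp (wv (t + (0,0,1)) i))
      = fun i : Fin 3 => (if i = 1 then (-1 : ℂ) else 1) • (1 : Matrix (Fin 2) (Fin 2) ℂ) := by
    have e1 : wv (1,0,0) = ![0,1,1] := by decide
    have e2 : wv (0,1,0) = ![1,0,1] := by decide
    have e3 : wv (0,0,1) = ![1,1,0] := by decide
    funext i
    simp only [wv_add, e1, e2, e3]
    fin_cases i
    · simpa using σp_quad_a (wv t 0)
    · simpa using σp_quad_b (wv t 1)
    · simpa using σp_quad_c (wv t 2)
  rw [key, pauliTensor_smul, pauliTensor_one]
  norm_num [Fin.prod_univ_three]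


/-- The hypergraph on `(ZMod 3)³` whose 27 hyperedges are the translates of
`{t, t+(1,0,0), t+(0,1,0), t+(0,0,1)}` is proper Eulerian (each hyperedge has 4 elements, the
hyperedges are distinct, each vertex lies in exactly 4 of them) and admits a 3-qubit
Pauli-based magic assignment `v ↦ ε_v · (P₁ ⊗ P₂ ⊗ P₃)` with no identity factors, all 27
identity-free Pauli words pairwise distinct, observables on each hyperedge commuting, and all
27 hyperedge products equal to `-I`. -/
theorem stmt19 :
    (∀ t : ZMod 3 × ZMod 3 × ZMod 3, (edge27 t).card = 4) ∧
    Function.Injective edge27 ∧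
    (∀ v : ZMod 3 × ZMod 3 × ZMod 3,
      (Finset.univ.filter fun t => v ∈ edge27 t).card = 4) ∧
    ∃ (ε : ZMod 3 × ZMod 3 × ZMod 3 → ℂ)
      (P : ZMod 3 × ZMod 3 × ZMod 3 → Fin 3 → Matrix (Fin 2) (Fin 2) ℂ)
      (A : ZMod 3 × ZMod 3 × ZMod 3 → Matrix (Fin 3 → Fin 2) (Fin 3 → Fin 2) ℂ),
      A = (fun v => ε v • pauliTensor 3 (P v)) ∧
      (∀ v, ε v = 1 ∨ ε v = -1) ∧
      (∀ v, ∀ i : Fin 3, P v i = PX ∨ P v i = PY ∨ P v i = PZ) ∧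
      Function.Injective (fun v => pauliTensor 3 (P v)) ∧
      (∀ t : ZMod 3 × ZMod 3 × ZMod 3,
        ∀ u ∈ edge27 t, ∀ w ∈ edge27 t, Commute (A u) (A w)) ∧
      (∀ t : ZMod 3 × ZMod 3 × ZMod 3,
        A t * A (t + (1, 0, 0)) * A (t + (0, 1, 0)) * A (t + (0, 0, 1)) = -1) := by
  refine ⟨card_edge27, edge27_inj, filter_card, fun _ => 1,
    fun v i => σp (wv v i), fun v => pauliTensor 3 (fun i => σp (wv v i)),
    by funext v; rw [one_smul], fun v => Or.inl rfl, ?_, pt_inj, ?_, edge_prod⟩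
  · intro v i
    have : σp (wv v i) = PX ∨ σp (wv v i) = PY ∨ σp (wv v i) = PZ := by
      rcases zmod3_cases (wv v i) with h | h | h <;> rw [h]
      · exact Or.inl σp0
      · exact Or.inr (Or.inl σp1)
      · exact Or.inr (Or.inr σp2)
    exact this
  · intro t u hu w hw
    exact commute_pt u w (even_mm t u hu w hw)
end
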